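/- arXiv:2007.05945 — 2 statements merged into one kernel-verified Lean document; each statement's English description precedes it below -/
import Mathlib

section
/- There exist positive real numbers a₀,a₁,a₂,a₃,a₄ and b₀,b₁,b₂,b₃,b₄ such that the associated quartic operator Q has exactly five positive fixed points, i.e. the set {(x,y) ∈ ℝ² : x>0, y>0, Q(x,y)=(x,y)} has cardinality exactly 5. -/
/-!
By homogeneity, a positive fixed point `(x, y)` of `Q = (P, R)` lies on a ray `y = t x` with `t > 0`;
on that ray `Q(x, t x) = x⁴ Q(1, t)`, so `(x, t x)` is fixed exactly when `R(1, t) = t P(1, t)` and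
`x³ P(1, t) = 1`. Positive fixed points are therefore in bijection with the positive roots of the
quintic `R(1, t) - t P(1, t)`, and the coefficients below make this quintic `-(t-1)(t-2)(t-3)(t-4)(t-5)`.
-/

open Set

lemma eq_inv_rpow_inv_three_of_pow_three_mul_eq_one {x q : ℝ} (hx : 0 ≤ x) (h : x ^ 3 * q = 1) :
    x = q⁻¹ ^ (3⁻¹ : ℝ) := by
  rw [← eq_inv_of_mul_eq_one_left h]
  exact_mod_cast (Real.pow_rpow_inv_natCast hx three_ne_zero).symm

lemma inv_rpow_inv_three_pow_three_mul {q : ℝ} (hq : 0 < q) : (q⁻¹ ^ (3⁻¹ : ℝ)) ^ 3 * q = 1 := by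
  have h := Real.rpow_inv_natCast_pow (inv_pos.2 hq).le three_ne_zero
  push_cast at h
  rw [h, inv_mul_cancel₀ hq.ne']

section HomogeneousMap

variable (P R : ℝ → ℝ → ℝ)

def positiveFixedPoints : Set (ℝ × ℝ) :=
  {p | 0 < p.1 ∧ 0 < p.2 ∧ (P p.1 p.2, R p.1 p.2) = p}

noncomputable def rayFixedPoint (t : ℝ) : ℝ × ℝ :=
  ((P 1 t)⁻¹ ^ (3⁻¹ : ℝ), t * (P 1 t)⁻¹ ^ (3⁻¹ : ℝ))

variable {P R}

lemma injOn_rayFixedPoint (hP_pos : ∀ t, 0 < t → 0 < P 1 t) :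
    InjOn (rayFixedPoint P) {t | 0 < t} := by
  intro s hs t ht h
  simp only [rayFixedPoint, Prod.mk.injEq] at h
  obtain ⟨hx, hy⟩ := h
  have hx_pos : 0 < (P 1 s)⁻¹ ^ (3⁻¹ : ℝ) := by have := hP_pos s hs; positivity
  rw [hx] at hy hx_pos
  exact mul_right_cancel₀ hx_pos.ne' hy

lemma positiveFixedPoints_eq_image
    (hP : ∀ x t, P x (t * x) = x ^ 4 * P 1 t) (hR : ∀ x t, R x (t * x) = x ^ 4 * R 1 t)
    (hP_pos : ∀ t, 0 < t → 0 < P 1 t) :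
    positiveFixedPoints P R = rayFixedPoint P '' {t | 0 < t ∧ R 1 t = t * P 1 t} := by
  ext ⟨x, y⟩
  simp only [positiveFixedPoints, rayFixedPoint, mem_ofPred_eq, mem_image, Prod.mk.injEq]
  constructor
  · rintro ⟨hx, hy, hPx, hRy⟩
    obtain ⟨t, rfl⟩ : ∃ t, y = t * x := ⟨y / x, (div_mul_cancel₀ y hx.ne').symm⟩
    rw [hP] at hPx
    rw [hR] at hRy
    have hPt : x ^ 3 * P 1 t = 1 := mul_left_cancel₀ hx.ne' (by linear_combination hPx)
    have hRt : x ^ 3 * R 1 t = t := mul_left_cancel₀ hx.ne' (by linear_combination hRy)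
    have hroot : R 1 t = t * P 1 t := by linear_combination -R 1 t * hPt + P 1 t * hRt
    have hx_eq := eq_inv_rpow_inv_three_of_pow_three_mul_eq_one hx.le hPt
    exact ⟨t, ⟨pos_of_mul_pos_left hy hx.le, hroot⟩, hx_eq.symm, by rw [← hx_eq]⟩
  · rintro ⟨t, ⟨ht, hroot⟩, rfl, rfl⟩
    have hPt := hP_pos t ht
    set x := (P 1 t)⁻¹ ^ (3⁻¹ : ℝ)
    have hcube : x ^ 3 * P 1 t = 1 := inv_rpow_inv_three_pow_three_mul hPt
    refine ⟨by positivity, by positivity, ?_, ?_⟩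
    · rw [hP]; linear_combination x * hcube
    · rw [hR, hroot]; linear_combination t * x * hcube

lemma encard_positiveFixedPoints
    (hP : ∀ x t, P x (t * x) = x ^ 4 * P 1 t) (hR : ∀ x t, R x (t * x) = x ^ 4 * R 1 t)
    (hP_pos : ∀ t, 0 < t → 0 < P 1 t) :
    (positiveFixedPoints P R).encard = {t | 0 < t ∧ R 1 t = t * P 1 t}.encard := by
  rw [positiveFixedPoints_eq_image hP hR hP_pos]
  exact (injOn_rayFixedPoint hP_pos).mono (fun t ht ↦ ht.1) |>.encard_image

end HomogeneousMap

def quarticForm (c₀ c₁ c₂ c₃ c₄ x y : ℝ) : ℝ :=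
  c₀ * x ^ 4 + 4 * c₁ * x ^ 3 * y + 6 * c₂ * x ^ 2 * y ^ 2 + 4 * c₃ * x * y ^ 3 + c₄ * y ^ 4

lemma quarticForm_mul_right (c₀ c₁ c₂ c₃ c₄ x t : ℝ) :
    quarticForm c₀ c₁ c₂ c₃ c₄ x (t * x) = x ^ 4 * quarticForm c₀ c₁ c₂ c₃ c₄ 1 t := by
  unfold quarticForm; ring

lemma quarticForm_pos {c₀ c₁ c₂ c₃ c₄ : ℝ}
    (h₀ : 0 < c₀) (h₁ : 0 < c₁) (h₂ : 0 < c₂) (h₃ : 0 < c₃) (h₄ : 0 < c₄) {x y : ℝ} (hx : 0 < x) (hy : 0 < y) : 0 < quarticForm c₀ c₁ c₂ c₃ c₄ x y := by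
  unfold quarticForm; positivity

lemma positiveRoots_eq_one_to_five :
    {t : ℝ | 0 < t ∧ quarticForm 120 1 (229 / 6) (35 / 4) 19 1 t =
      t * quarticForm 278 1 20 1 1 1 t} = {1, 2, 3, 4, 5} := by
  ext t
  have hquintic : quarticForm 120 1 (229 / 6) (35 / 4) 19 1 t - t * quarticForm 278 1 20 1 1 1 t
      = -((t - 1) * (t - 2) * (t - 3) * (t - 4) * (t - 5)) := by
    unfold quarticForm; ring
  simp only [mem_ofPred_eq, mem_insert_iff, mem_singleton_iff]
  constructor
  · rintro ⟨-, h⟩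
    have := hquintic ▸ sub_eq_zero.2 h
    simpa only [neg_eq_zero, mul_eq_zero, sub_eq_zero, or_assoc] using this
  · rintro (rfl | rfl | rfl | rfl | rfl) <;> exact ⟨by norm_num, by linear_combination hquintic⟩

theorem stmt_6 :
    ∃ a₀ a₁ a₂ a₃ a₄ b₀ b₁ b₂ b₃ b₄ : ℝ,
      0 < a₀ ∧ 0 < a₁ ∧ 0 < a₂ ∧ 0 < a₃ ∧ 0 < a₄ ∧
      0 < b₀ ∧ 0 < b₁ ∧ 0 < b₂ ∧ 0 < b₃ ∧ 0 < b₄ ∧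
      ({p : ℝ × ℝ | 0 < p.1 ∧ 0 < p.2 ∧
        (a₀ * p.1 ^ 4 + 4 * a₁ * p.1 ^ 3 * p.2 + 6 * a₂ * p.1 ^ 2 * p.2 ^ 2
          + 4 * a₃ * p.1 * p.2 ^ 3 + a₄ * p.2 ^ 4,
         b₀ * p.1 ^ 4 + 4 * b₁ * p.1 ^ 3 * p.2 + 6 * b₂ * p.1 ^ 2 * p.2 ^ 2
          + 4 * b₃ * p.1 * p.2 ^ 3 + b₄ * p.2 ^ 4) = p}).encard = 5 := by
  refine ⟨278, 1, 20, 1, 1, 120, 1, 229 / 6, 35 / 4, 19, by norm_num, by norm_num, by norm_num,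
    by norm_num, by norm_num, by norm_num, by norm_num, by norm_num, by norm_num, by norm_num, ?_⟩
  have h := encard_positiveFixedPoints (quarticForm_mul_right 278 1 20 1 1)
    (quarticForm_mul_right 120 1 (229 / 6) (35 / 4) 19)
    (fun t ht ↦ quarticForm_pos (by norm_num) (by norm_num) (by norm_num) (by norm_num)
      (by norm_num) one_pos ht)
  rw [positiveRoots_eq_one_to_five] at h
  refine h.trans ?_
  rw [encard_insert_of_notMem (by norm_num), encard_insert_of_notMem (by norm_num),
    encard_insert_of_notMem (by norm_num), encard_insert_of_notMem (by norm_num), encard_singleton]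
  rfl
end

section
/- Suppose the four critical points λ₁<λ₂<λ₃<λ₄ of P₅ are all positive, i.e. λ₁ > 0, and that P₅(λ₁) > 0, P₅(λ₂) < 0, P₅(λ₃) > 0 and P₅(λ₄) < 0. Then the quartic operator Q has exactly five positive fixed points: the set {(x,y) ∈ ℝ² : x>0, y>0, Q(x,y)=(x,y)} has cardinality exactly 5. -/
/-!
Write a positive point as `(x, ξ x)`. Both components of `Q` are homogeneous of degree 4, so
`Q(x, ξ x) = (x, ξ x)` amounts to `x³ φ(ξ) = 1` together with `ξ φ(ξ) = ψ(ξ)`, i.e. `P₅(ξ) = 0`,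
where `φ = Q₁(1, ·) > 0` and `ψ = Q₂(1, ·)`; hence positive fixed points correspond bijectively to
positive roots of `P₅`. The quintic `P₅` changes sign on `(0, λ₁), (λ₁, λ₂), …, (λ₄, ∞)`, giving
five positive roots, and being of degree five it has no others.
-/

open Set Polynomial Filter

theorem exists_mem_Ioo_eq_zero_of_mul_neg {f : ℝ → ℝ} {a b : ℝ} (hab : a ≤ b)
    (hf : ContinuousOn f (Icc a b)) (hsign : f a * f b < 0) : ∃ x ∈ Ioo a b, f x = 0 := by
  rcases lt_or_gt_of_ne (left_ne_zero_of_mul hsign.ne) with ha | ha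
  · exact intermediate_value_Ioo hab hf ⟨ha, pos_of_mul_neg_right hsign ha.le⟩
  · exact intermediate_value_Ioo' hab hf ⟨neg_of_mul_neg_right hsign ha.le, ha⟩

theorem le_encard_zeros_of_signChanges {f : ℝ → ℝ} (hf : Continuous f) {n : ℕ}
    (t : Fin (n + 1) → ℝ) (ht : StrictMono t)
    (hsign : ∀ i : Fin n, f (t i.castSucc) * f (t i.succ) < 0) :
    (n : ℕ∞) ≤ {x | t 0 < x ∧ f x = 0}.encard := by
  choose r hr hfr using fun i : Fin n ↦ exists_mem_Ioo_eq_zero_of_mul_neg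
    (ht (Fin.castSucc_lt_succ (i := i))).le hf.continuousOn (hsign i)
  have hr_mono : StrictMono r := fun i j hij ↦
    calc r i < t i.succ := (hr i).2
      _ ≤ t j.castSucc := ht.monotone (Fin.succ_le_castSucc_iff.mpr hij)
      _ < r j := (hr j).1
  calc (n : ℕ∞) ≤ (range r).encard := by simpa using hr_mono.injective.encard_range
    _ ≤ _ := encard_le_encard <| range_subset_iff.mpr fun i ↦
      show t 0 < r i ∧ f (r i) = 0 from ⟨(ht.monotone (Fin.zero_le _)).trans_lt (hr i).1, hfr i⟩

theorem Polynomial.encard_setOf_eval_eq_zero_le {R : Type*} [CommRing R] [IsDomain R]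
    {p : R[X]} (hp : p ≠ 0) : {x | p.eval x = 0}.encard ≤ p.natDegree := by
  classical
  calc {x | p.eval x = 0}.encard = (p.roots.toFinset : Set R).encard := by
        congr; ext; simp [hp]
    _ ≤ p.natDegree := by
      rw [encard_coe_eq_coe_finsetCard]
      exact_mod_cast (Multiset.toFinset_card_le _).trans (card_roots' p)

theorem Polynomial.encard_zeros_eq_of_signChanges {p : ℝ[X]} (hp : p ≠ 0) {n : ℕ}
    (hdeg : p.natDegree ≤ n) (t : Fin (n + 1) → ℝ) (ht : StrictMono t)
    (hsign : ∀ i : Fin n, p.eval (t i.castSucc) * p.eval (t i.succ) < 0) :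
    {x | t 0 < x ∧ p.eval x = 0}.encard = n :=
  le_antisymm
    ((encard_le_encard fun _ hx ↦ hx.2).trans <|
      (encard_setOf_eval_eq_zero_le hp).trans (by exact_mod_cast hdeg))
    (le_encard_zeros_of_signChanges p.continuous t ht hsign)

section Homogeneous

variable {F G : ℝ → ℝ → ℝ} {n : ℕ}

theorem fixed_iff_of_homogeneous (hF : ∀ x ξ, F x (ξ * x) = x ^ (n + 1) * F 1 ξ)
    (hG : ∀ x ξ, G x (ξ * x) = x ^ (n + 1) * G 1 ξ) {x ξ : ℝ} (hx : 0 < x) :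
    (F x (ξ * x), G x (ξ * x)) = (x, ξ * x) ↔
      x ^ n * F 1 ξ = 1 ∧ ξ * F 1 ξ - G 1 ξ = 0 := by
  rw [hF, hG, Prod.mk.injEq]
  constructor
  · rintro ⟨h₁, h₂⟩
    have hu : x ^ n * F 1 ξ = 1 :=
      mul_left_cancel₀ hx.ne' (by linear_combination h₁)
    have hscaled : x ^ (n + 1) * (ξ * F 1 ξ - G 1 ξ) = 0 := by
      linear_combination ξ * x * hu - h₂
    exact ⟨hu, (mul_eq_zero.mp hscaled).resolve_left (by positivity)⟩
  · rintro ⟨hu, hroot⟩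
    constructor
    · linear_combination x * hu
    · linear_combination ξ * x * hu - x ^ (n + 1) * hroot

theorem encard_posFixedPoints_eq (hF : ∀ x ξ, F x (ξ * x) = x ^ (n + 1) * F 1 ξ)
    (hG : ∀ x ξ, G x (ξ * x) = x ^ (n + 1) * G 1 ξ) (hn : n ≠ 0)
    (hFpos : ∀ ξ, 0 < ξ → 0 < F 1 ξ) :
    {p : ℝ × ℝ | 0 < p.1 ∧ 0 < p.2 ∧ (F p.1 p.2, G p.1 p.2) = p}.encard =
      {ξ | 0 < ξ ∧ ξ * F 1 ξ - G 1 ξ = 0}.encard := by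
  set S := {p : ℝ × ℝ | 0 < p.1 ∧ 0 < p.2 ∧ (F p.1 p.2, G p.1 p.2) = p}
  have mem_S {x ξ : ℝ} (hx : 0 < x) :
      (x, ξ * x) ∈ S ↔ 0 < ξ ∧ x ^ n * F 1 ξ = 1 ∧ ξ * F 1 ξ - G 1 ξ = 0 := by
    simp only [S, mem_ofPred_eq, fixed_iff_of_homogeneous hF hG hx, hx, true_and,
      mul_pos_iff_of_pos_right hx]
  have eta {p : ℝ × ℝ} (hp : p ∈ S) : p = (p.1, p.2 / p.1 * p.1) := by
    rw [div_mul_cancel₀ _ hp.1.ne']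
  have hinj : InjOn (fun p : ℝ × ℝ ↦ p.2 / p.1) S := by
    intro p hp q hq hpq
    have hp' := (mem_S hp.1).mp (eta hp ▸ hp)
    have hq' := (mem_S hq.1).mp (eta hq ▸ hq)
    simp only at hpq
    rw [← hpq] at hq'
    have h₁ : p.1 = q.1 := (pow_left_inj₀ hp.1.le hq.1.le hn).mp <|
      mul_right_cancel₀ (hFpos _ hp'.1).ne' (hp'.2.1.trans hq'.2.1.symm)
    rw [eta hp, eta hq, hpq, h₁]
  rw [← hinj.encard_image]
  congr
  ext ξ
  constructor
  · rintro ⟨p, hp, rfl⟩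
    obtain ⟨hξ, -, hroot⟩ := (mem_S hp.1).mp (eta hp ▸ hp)
    exact ⟨hξ, hroot⟩
  · rintro ⟨hξ, hroot⟩
    set x := (F 1 ξ)⁻¹ ^ (n⁻¹ : ℝ)
    have hx : 0 < x := Real.rpow_pos_of_pos (inv_pos.mpr (hFpos ξ hξ)) _
    refine ⟨(x, ξ * x), (mem_S hx).mpr ⟨hξ, ?_, hroot⟩, by simp [hx.ne']⟩
    rw [Real.rpow_inv_natCast_pow (inv_pos.mpr (hFpos ξ hξ)).le hn,
      inv_mul_cancel₀ (hFpos ξ hξ).ne']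

end Homogeneous

section Quintic

variable {R : Type*} [Semiring R]

noncomputable def quintic (c₀ c₁ c₂ c₃ c₄ c₅ : R) : R[X] :=
  C c₅ * X ^ 5 + C c₄ * X ^ 4 + C c₃ * X ^ 3 + C c₂ * X ^ 2 + C c₁ * X + C c₀

@[simp]
theorem eval_quintic (c₀ c₁ c₂ c₃ c₄ c₅ x : R) :
    (quintic c₀ c₁ c₂ c₃ c₄ c₅).eval x =
      c₅ * x ^ 5 + c₄ * x ^ 4 + c₃ * x ^ 3 + c₂ * x ^ 2 + c₁ * x + c₀ := by
  simp [quintic]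

theorem natDegree_quintic {c₀ c₁ c₂ c₃ c₄ c₅ : R} (h : c₅ ≠ 0) :
    (quintic c₀ c₁ c₂ c₃ c₄ c₅).natDegree = 5 := by
  unfold quintic; compute_degree!

theorem leadingCoeff_quintic {c₀ c₁ c₂ c₃ c₄ c₅ : R} (h : c₅ ≠ 0) :
    (quintic c₀ c₁ c₂ c₃ c₄ c₅).leadingCoeff = c₅ := by
  rw [leadingCoeff, natDegree_quintic h]
  simp [quintic]

end Quintic

theorem Polynomial.exists_gt_eval_pos {p : ℝ[X]} (hdeg : 0 < p.degree)
    (hlead : 0 ≤ p.leadingCoeff) (b : ℝ) : ∃ x, b < x ∧ 0 < p.eval x :=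
  ((eventually_gt_atTop b).and
    ((tendsto_atTop_of_leadingCoeff_nonneg p hdeg hlead).eventually_gt_atTop 0)).exists

def binaryQuartic (c₀ c₁ c₂ c₃ c₄ x y : ℝ) : ℝ :=
  c₀ * x ^ 4 + 4 * c₁ * x ^ 3 * y + 6 * c₂ * x ^ 2 * y ^ 2 + 4 * c₃ * x * y ^ 3 + c₄ * y ^ 4

theorem binaryQuartic_homogeneous (c₀ c₁ c₂ c₃ c₄ x ξ : ℝ) :
    binaryQuartic c₀ c₁ c₂ c₃ c₄ x (ξ * x) = x ^ 4 * binaryQuartic c₀ c₁ c₂ c₃ c₄ 1 ξ := by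
  unfold binaryQuartic; ring

theorem stmt_17_general (a₀ a₁ a₂ a₃ a₄ b₀ b₁ b₂ b₃ b₄ : ℝ)
    (ha₀ : 0 < a₀) (ha₁ : 0 < a₁) (ha₂ : 0 < a₂) (ha₃ : 0 < a₃) (ha₄ : 0 < a₄)
    (hb₀ : 0 < b₀)
    (Q : ℝ × ℝ → ℝ × ℝ)
    (hQ : ∀ x y : ℝ, Q (x, y) =
      (a₀ * x ^ 4 + 4 * a₁ * x ^ 3 * y + 6 * a₂ * x ^ 2 * y ^ 2 + 4 * a₃ * x * y ^ 3 + a₄ * y ^ 4,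
       b₀ * x ^ 4 + 4 * b₁ * x ^ 3 * y + 6 * b₂ * x ^ 2 * y ^ 2 + 4 * b₃ * x * y ^ 3 + b₄ * y ^ 4))
    (P₅ : ℝ → ℝ)
    (hP₅ : ∀ ξ : ℝ, P₅ ξ = a₄ * ξ ^ 5 + (4 * a₃ - b₄) * ξ ^ 4 + (6 * a₂ - 4 * b₃) * ξ ^ 3
      + (4 * a₁ - 6 * b₂) * ξ ^ 2 + (a₀ - 4 * b₁) * ξ - b₀)
    (lam₁ lam₂ lam₃ lam₄ : ℝ) (h12 : lam₁ < lam₂) (h23 : lam₂ < lam₃) (h34 : lam₃ < lam₄)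
    (hpos : 0 < lam₁) (hval₁ : 0 < P₅ lam₁) (hval₂ : P₅ lam₂ < 0) (hval₃ : 0 < P₅ lam₃) (hval₄ : P₅ lam₄ < 0) :
    ({p : ℝ × ℝ | 0 < p.1 ∧ 0 < p.2 ∧ Q p = p}).encard = 5 := by
  set p := quintic (-b₀) (a₀ - 4 * b₁) (4 * a₁ - 6 * b₂) (6 * a₂ - 4 * b₃) (4 * a₃ - b₄) a₄
  have hp : ∀ ξ, P₅ ξ = p.eval ξ := fun ξ ↦ by rw [hP₅, eval_quintic]; ring
  have hQ' : Q = fun p ↦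
      (binaryQuartic a₀ a₁ a₂ a₃ a₄ p.1 p.2, binaryQuartic b₀ b₁ b₂ b₃ b₄ p.1 p.2) :=
    funext fun (x, y) ↦ hQ x y
  rw [hQ', encard_posFixedPoints_eq (n := 3) (binaryQuartic_homogeneous a₀ a₁ a₂ a₃ a₄)
    (binaryQuartic_homogeneous b₀ b₁ b₂ b₃ b₄) three_ne_zero
    fun ξ hξ ↦ by unfold binaryQuartic; positivity]
  have hroots : ∀ ξ, ξ * binaryQuartic a₀ a₁ a₂ a₃ a₄ 1 ξ - binaryQuartic b₀ b₁ b₂ b₃ b₄ 1 ξ =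
      p.eval ξ := fun ξ ↦ by rw [eval_quintic]; unfold binaryQuartic; ring
  simp only [hroots]
  have hdeg : p.natDegree = 5 := natDegree_quintic ha₄.ne'
  obtain ⟨M, hM, hval₅⟩ := exists_gt_eval_pos (p := p)
    (natDegree_pos_iff_degree_pos.mp (by omega)) (leadingCoeff_quintic ha₄.ne' ▸ ha₄.le) lam₄
  have hval₀ : p.eval 0 < 0 := by simpa [p] using hb₀
  rw [hp] at hval₁ hval₂ hval₃ hval₄
  refine encard_zeros_eq_of_signChanges (ne_zero_of_natDegree_gt (n := 0) (by omega)) hdeg.le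
    ![0, lam₁, lam₂, lam₃, lam₄, M]
    (Fin.strictMono_iff_lt_succ.mpr <| by
      simpa [Fin.forall_fin_succ] using ⟨hpos, h12, h23, h34, hM⟩)
    (by simpa [Fin.forall_fin_succ] using ⟨mul_neg_of_neg_of_pos hval₀ hval₁,
      mul_neg_of_pos_of_neg hval₁ hval₂, mul_neg_of_neg_of_pos hval₂ hval₃,
      mul_neg_of_pos_of_neg hval₃ hval₄, mul_neg_of_neg_of_pos hval₄ hval₅⟩)

theorem stmt_17 (a₀ a₁ a₂ a₃ a₄ b₀ b₁ b₂ b₃ b₄ : ℝ)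
    (ha₀ : 0 < a₀) (ha₁ : 0 < a₁) (ha₂ : 0 < a₂) (ha₃ : 0 < a₃) (ha₄ : 0 < a₄)
    (hb₀ : 0 < b₀) (hb₁ : 0 < b₁) (hb₂ : 0 < b₂) (hb₃ : 0 < b₃) (hb₄ : 0 < b₄)
    (Q : ℝ × ℝ → ℝ × ℝ)
    (hQ : ∀ x y : ℝ, Q (x, y) =
      (a₀ * x ^ 4 + 4 * a₁ * x ^ 3 * y + 6 * a₂ * x ^ 2 * y ^ 2 + 4 * a₃ * x * y ^ 3 + a₄ * y ^ 4,
       b₀ * x ^ 4 + 4 * b₁ * x ^ 3 * y + 6 * b₂ * x ^ 2 * y ^ 2 + 4 * b₃ * x * y ^ 3 + b₄ * y ^ 4))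
    (P₅ : ℝ → ℝ)
    (hP₅ : ∀ ξ : ℝ, P₅ ξ = a₄ * ξ ^ 5 + (4 * a₃ - b₄) * ξ ^ 4 + (6 * a₂ - 4 * b₃) * ξ ^ 3
      + (4 * a₁ - 6 * b₂) * ξ ^ 2 + (a₀ - 4 * b₁) * ξ - b₀)
    (lam₁ lam₂ lam₃ lam₄ : ℝ) (h12 : lam₁ < lam₂) (h23 : lam₂ < lam₃) (h34 : lam₃ < lam₄)
    (hcrit : ∀ ξ : ℝ, deriv P₅ ξ = 5 * a₄ * (ξ - lam₁) * (ξ - lam₂) * (ξ - lam₃) * (ξ - lam₄))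
    (hpos : 0 < lam₁) (hval₁ : 0 < P₅ lam₁) (hval₂ : P₅ lam₂ < 0) (hval₃ : 0 < P₅ lam₃) (hval₄ : P₅ lam₄ < 0) :
    ({p : ℝ × ℝ | 0 < p.1 ∧ 0 < p.2 ∧ Q p = p}).encard = 5 :=
  stmt_17_general a₀ a₁ a₂ a₃ a₄ b₀ b₁ b₂ b₃ b₄ ha₀ ha₁ ha₂ ha₃ ha₄ hb₀ Q hQ P₅ hP₅ lam₁ lam₂ lam₃
    lam₄ h12 h23 h34 hpos hval₁ hval₂ hval₃ hval₄
end
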